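/- arXiv:2104.13782 — 4 statements merged into one kernel-verified Lean document; each statement's English description precedes it below -/
import Mathlib

section
/- Let h : ℝ^m → ℝ be convex and l_h-Lipschitz (equivalently, all subgradients of h have norm at most l_h). Then for any c ∈ ℝ^m and 0 < μ₁ ≤ μ₂, the Moreau envelope ψ(μ) = min_y [h(y) + (1/(2μ))‖y − c‖²] satisfies ψ(μ₁) − ψ(μ₂) ≤ (l_h²/2)(μ₂ − μ₁). -/
/-!
Comparing with the point `c + (μ₁/μ₂) • (p₂ - c)`, which pulls `p₂` towards the centre, bounds
`ψ(μ₁)` by the `μ₂`-objective at `p₂` plus a Lipschitz error `l_h (1 - μ₁/μ₂) ‖p₂ - c‖` and a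
quadratic correction; maximising over `‖p₂ - c‖` leaves exactly `(l_h²/2)(μ₂ - μ₁)`.
-/

noncomputable def moreauObjective {E : Type*} [NormedAddCommGroup E] (h : E → ℝ) (c : E) (μ : ℝ)
    (y : E) : ℝ :=
  h y + 1 / (2 * μ) * ‖y - c‖ ^ 2

lemma moreau_shrink_gap_le (lh r μ₁ μ₂ : ℝ) (hμ₁ : 0 < μ₁) (hle : μ₁ ≤ μ₂) :
    lh * ((1 - μ₁ / μ₂) * r) + 1 / (2 * μ₁) * (μ₁ / μ₂ * r) ^ 2 - 1 / (2 * μ₂) * r ^ 2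
      ≤ lh ^ 2 / 2 * (μ₂ - μ₁) := by
  have hμ₂ : 0 < μ₂ := hμ₁.trans_le hle
  have hgap : lh ^ 2 / 2 * (μ₂ - μ₁)
      - (lh * ((1 - μ₁ / μ₂) * r) + 1 / (2 * μ₁) * (μ₁ / μ₂ * r) ^ 2 - 1 / (2 * μ₂) * r ^ 2)
      = (μ₂ - μ₁) * (lh * μ₂ - r) ^ 2 / (2 * μ₂ ^ 2) := by
    field_simp
    ring
  have : 0 ≤ (μ₂ - μ₁) * (lh * μ₂ - r) ^ 2 / (2 * μ₂ ^ 2) := by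
    have : 0 ≤ μ₂ - μ₁ := sub_nonneg.mpr hle
    positivity
  linarith

lemma moreauObjective_shrink_le {E : Type*} [NormedAddCommGroup E] [NormedSpace ℝ E]
    {h : E → ℝ} {lh : ℝ} (hlip : ∀ x y, |h x - h y| ≤ lh * ‖x - y‖)
    {μ₁ μ₂ : ℝ} (hμ₁ : 0 < μ₁) (hle : μ₁ ≤ μ₂) (c p : E) :
    moreauObjective h c μ₁ (c + (μ₁ / μ₂) • (p - c))
      ≤ moreauObjective h c μ₂ p + lh ^ 2 / 2 * (μ₂ - μ₁) := by
  have hμ₂ : 0 < μ₂ := hμ₁.trans_le hle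
  set t := μ₁ / μ₂
  have ht0 : 0 ≤ t := by positivity
  have ht1 : t ≤ 1 := (div_le_one hμ₂).mpr hle
  have hdist_c : ‖c + t • (p - c) - c‖ = t * ‖p - c‖ := by
    rw [add_sub_cancel_left, norm_smul, Real.norm_of_nonneg ht0]
  have hdist_p : ‖c + t • (p - c) - p‖ = (1 - t) * ‖p - c‖ := by
    rw [show c + t • (p - c) - p = (1 - t) • (c - p) by module, norm_smul,
      Real.norm_of_nonneg (sub_nonneg.mpr ht1), norm_sub_rev]
  have hh : h (c + t • (p - c)) ≤ h p + lh * ((1 - t) * ‖p - c‖) := by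
    have := (abs_le.mp (hlip (c + t • (p - c)) p)).2
    rw [hdist_p] at this
    linarith
  have := moreau_shrink_gap_le lh ‖p - c‖ μ₁ μ₂ hμ₁ hle
  unfold moreauObjective
  rw [hdist_c]
  linarith

theorem moreau_envelope_lipschitz_in_mu_general {m : ℕ}
    (h : EuclideanSpace ℝ (Fin m) → ℝ)
    (lh : ℝ) (hlip : ∀ x y, |h x - h y| ≤ lh * ‖x - y‖)
    (μ₁ μ₂ : ℝ) (hμ₁ : 0 < μ₁) (hle : μ₁ ≤ μ₂)
    (c p₁ p₂ : EuclideanSpace ℝ (Fin m))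
    (hp₁ : IsMinOn (fun y => h y + 1 / (2 * μ₁) * ‖y - c‖ ^ 2) Set.univ p₁) :
    (h p₁ + 1 / (2 * μ₁) * ‖p₁ - c‖ ^ 2) - (h p₂ + 1 / (2 * μ₂) * ‖p₂ - c‖ ^ 2)
      ≤ lh ^ 2 / 2 * (μ₂ - μ₁) := by
  have hmin : moreauObjective h c μ₁ p₁
      ≤ moreauObjective h c μ₁ (c + (μ₁ / μ₂) • (p₂ - c)) :=
    hp₁ (Set.mem_univ _)
  have hshrink := moreauObjective_shrink_le hlip hμ₁ hle c p₂
  unfold moreauObjective at hmin hshrink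
  linarith

/-- The Moreau envelope of an `l_h`-Lipschitz convex function is
`(l_h²/2)`-Lipschitz in the parameter μ. -/
theorem moreau_envelope_lipschitz_in_mu {m : ℕ}
    (h : EuclideanSpace ℝ (Fin m) → ℝ) (hconv : ConvexOn ℝ Set.univ h)
    (lh : ℝ) (hlip : ∀ x y, |h x - h y| ≤ lh * ‖x - y‖)
    (μ₁ μ₂ : ℝ) (hμ₁ : 0 < μ₁) (hle : μ₁ ≤ μ₂)
    (c p₁ p₂ : EuclideanSpace ℝ (Fin m))
    (hp₁ : IsMinOn (fun y => h y + 1 / (2 * μ₁) * ‖y - c‖ ^ 2) Set.univ p₁)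
    (hp₂ : IsMinOn (fun y => h y + 1 / (2 * μ₂) * ‖y - c‖ ^ 2) Set.univ p₂) :
    (h p₁ + 1 / (2 * μ₁) * ‖p₁ - c‖ ^ 2) - (h p₂ + 1 / (2 * μ₂) * ‖p₂ - c‖ ^ 2)
      ≤ lh ^ 2 / 2 * (μ₂ - μ₁) :=
  moreau_envelope_lipschitz_in_mu_general h lh hlip μ₁ μ₂ hμ₁ hle c p₁ p₂ hp₁
end

section
/- Let f : ℝ^n → ℝ be differentiable with bounded gradient ‖∇f‖ ≤ l_f, let h : ℝ^m → ℝ be convex and l_h-Lipschitz, A ∈ ℝ^{m×n}, b ∈ ℝ^m, μ > 0. Define G(x) = f(x) + h(v) + (1/(2μ))‖Ax − b − v‖² where v = P_μ(Ax − b). Then G is differentiable with ∇G(x) = ∇f(x) + (1/μ)Aᵀ(Ax − b − v), and ‖∇G(x)‖ ≤ l_f + l_h‖A‖ for all x. -/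
open scoped RealInnerProductSpace

/-!
A minimizer `w = P_μ(c)` of `proxObjective h μ c` satisfies the optimality condition
`(1/μ)(c - w) ∈ ∂h(w)`: compare `w` with `w + t(y - w)` using convexity and let `t → 0`.
Monotonicity of `∂h` makes `c ↦ c - P_μ(c)` monotone, and testing the minimality of `P_μ(c)` and
`P_μ(c')` against each other then pins the change of the Moreau envelope `M(c') - M(c)` to
`(1/μ)⟪c - P_μ(c), c' - c⟫` up to `‖c' - c‖² / (2μ)`. Along `x ↦ Ax - b` this error is quadratic in
`x`, so the envelope term has gradient `(1/μ) Aᵀ(Ax - b - v)`. The bound holds because every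
subgradient of an `l_h`-Lipschitz function has norm at most `l_h`.
-/

open Asymptotics Filter Set Topology

theorem le_of_forall_le_add_mul {a b C : ℝ} (h : ∀ t ∈ Ioc (0 : ℝ) 1, a ≤ b + t * C) :
    a ≤ b := by
  have hlim : Tendsto (fun t : ℝ => b + t * C) (𝓝[>] 0) (𝓝 b) := by
    have : Tendsto (fun t : ℝ => b + t * C) (𝓝 0) (𝓝 (b + 0 * C)) :=
      tendsto_const_nhds.add (tendsto_id.mul_const C)
    simpa using this.mono_left nhdsWithin_le_nhds
  exact ge_of_tendsto hlim (by filter_upwards [Ioc_mem_nhdsGT one_pos] with t ht using h t ht)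

theorem hasGradientAt_of_abs_sub_inner_le_sq {F : Type*} [NormedAddCommGroup F]
    [InnerProductSpace ℝ F] [CompleteSpace F] {φ : F → ℝ} {g x : F} {K : ℝ}
    (hK : ∀ z, |φ z - φ x - ⟪g, z - x⟫| ≤ K * ‖z - x‖ ^ 2) : HasGradientAt φ g x := by
  rw [hasGradientAt_iff_isLittleO]
  refine (IsBigO.of_bound K (Eventually.of_forall fun z => ?_)).trans_isLittleO
    (isLittleO_pow_sub_sub x one_lt_two)
  simpa only [Real.norm_eq_abs, norm_pow, abs_norm] using hK z

theorem HasGradientAt.add {F : Type*} [NormedAddCommGroup F] [InnerProductSpace ℝ F]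
    [CompleteSpace F] {f g : F → ℝ} {f' g' x : F} (hf : HasGradientAt f f' x)
    (hg : HasGradientAt g g' x) : HasGradientAt (fun z => f z + g z) (f' + g') x := by
  rw [hasGradientAt_iff_hasFDerivAt, map_add]
  exact hf.hasFDerivAt.add hg.hasFDerivAt

section Subgradient

variable {E : Type*} [NormedAddCommGroup E] [InnerProductSpace ℝ E] {h : E → ℝ} {s s' w w' : E}

def HasSubgradientAt (h : E → ℝ) (s w : E) : Prop :=
  ∀ y, h w + ⟪s, y - w⟫ ≤ h y

theorem HasSubgradientAt.inner_sub_nonneg (hs : HasSubgradientAt h s w)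
    (hs' : HasSubgradientAt h s' w') : 0 ≤ ⟪s' - s, w' - w⟫ := by
  have h₁ := hs w'
  have h₂ := hs' w
  rw [← neg_sub w' w, inner_neg_right] at h₂
  rw [inner_sub_left]
  linarith

theorem HasSubgradientAt.norm_le [Nontrivial E] {lh : ℝ} (hs : HasSubgradientAt h s w)
    (hlh : ∀ x y, |h x - h y| ≤ lh * ‖x - y‖) : ‖s‖ ≤ lh := by
  obtain ⟨e, he⟩ := exists_ne (0 : E)
  have hlh₀ : 0 ≤ lh := by
    have := (abs_nonneg _).trans (hlh e 0)
    rw [sub_zero] at this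
    exact nonneg_of_mul_nonneg_left this (norm_pos_iff.mpr he)
  rcases eq_or_ne s 0 with rfl | hs₀
  · simpa using hlh₀
  have hsub := hs (w + s)
  have hlip := (le_abs_self _).trans (hlh (w + s) w)
  rw [add_sub_cancel_left, real_inner_self_eq_norm_sq] at hsub
  rw [add_sub_cancel_left] at hlip
  have hsq : ‖s‖ * ‖s‖ ≤ lh * ‖s‖ := by linarith
  exact le_of_mul_le_mul_right hsq (norm_pos_iff.mpr hs₀)

theorem HasSubgradientAt.norm_adjoint_apply_le {F : Type*} [NormedAddCommGroup F]
    [InnerProductSpace ℝ F] [CompleteSpace E] [CompleteSpace F] {lh : ℝ}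
    (hs : HasSubgradientAt h s w) (hlh : ∀ x y, |h x - h y| ≤ lh * ‖x - y‖) (A : F →L[ℝ] E) :
    ‖ContinuousLinearMap.adjoint A s‖ ≤ lh * ‖A‖ := by
  rcases subsingleton_or_nontrivial E with _ | _
  · simp [Subsingleton.elim s 0, Subsingleton.elim A 0]
  calc ‖ContinuousLinearMap.adjoint A s‖ ≤ ‖ContinuousLinearMap.adjoint A‖ * ‖s‖ :=
        ContinuousLinearMap.le_opNorm _ _
    _ = ‖A‖ * ‖s‖ := by rw [LinearIsometryEquiv.norm_map]
    _ ≤ ‖A‖ * lh := by gcongr; exact hs.norm_le hlh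
    _ = lh * ‖A‖ := mul_comm _ _

end Subgradient

section Prox

variable {E : Type*} [NormedAddCommGroup E] [InnerProductSpace ℝ E] {h : E → ℝ} {μ : ℝ}
  {c c' w w' : E}

noncomputable def proxObjective (h : E → ℝ) (μ : ℝ) (c y : E) : ℝ :=
  h y + 1 / (2 * μ) * ‖y - c‖ ^ 2

theorem hasSubgradientAt_of_isMinOn_proxObjective (hconv : ConvexOn ℝ univ h) (hμ : 0 < μ)
    (hw : IsMinOn (proxObjective h μ c) univ w) : HasSubgradientAt h ((1 / μ) • (c - w)) w := by
  intro y
  suffices ⟪c - w, y - w⟫ ≤ μ * (h y - h w) by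
    rw [real_inner_smul_left, one_div]
    linarith [(inv_mul_le_iff₀ hμ).mpr this]
  refine le_of_forall_le_add_mul (C := ‖y - w‖ ^ 2 / 2) fun t ⟨ht₀, ht₁⟩ => ?_
  have hmin : proxObjective h μ c w ≤ proxObjective h μ c (w + t • (y - w)) := hw (mem_univ _)
  have hconvex : h (w + t • (y - w)) ≤ (1 - t) * h w + t * h y := by
    have := hconv.2 (mem_univ w) (mem_univ y) (sub_nonneg.mpr ht₁) ht₀.le (sub_add_cancel 1 t)
    rwa [show (1 - t) • w + t • y = w + t • (y - w) by module, smul_eq_mul, smul_eq_mul] at this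
  have hexpand : ‖w + t • (y - w) - c‖ ^ 2
      = ‖w - c‖ ^ 2 - 2 * t * ⟪c - w, y - w⟫ + t ^ 2 * ‖y - w‖ ^ 2 := by
    rw [add_sub_right_comm, norm_add_sq_real, inner_smul_right, norm_smul, mul_pow,
      Real.norm_eq_abs, sq_abs, ← neg_sub c w, inner_neg_left]
    ring
  have hgain :
      0 ≤ t * (h y - h w) + 1 / (2 * μ) * (t ^ 2 * ‖y - w‖ ^ 2 - 2 * t * ⟪c - w, y - w⟫) := by
    unfold proxObjective at hmin
    rw [hexpand] at hmin
    linarith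
  have hscaled : t * (h y - h w) + 1 / (2 * μ) * (t ^ 2 * ‖y - w‖ ^ 2 - 2 * t * ⟪c - w, y - w⟫)
      = t / μ * (μ * (h y - h w) + t * (‖y - w‖ ^ 2 / 2) - ⟪c - w, y - w⟫) := by
    field_simp
    ring
  rw [hscaled] at hgain
  linarith [nonneg_of_mul_nonneg_right hgain (by positivity)]

theorem inner_sub_sub_nonneg_of_isMinOn_proxObjective (hconv : ConvexOn ℝ univ h) (hμ : 0 < μ)
    (hw : IsMinOn (proxObjective h μ c) univ w) (hw' : IsMinOn (proxObjective h μ c') univ w') :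
    0 ≤ ⟪(c' - w') - (c - w), c' - c⟫ := by
  have hmono := (hasSubgradientAt_of_isMinOn_proxObjective hconv hμ hw).inner_sub_nonneg
    (hasSubgradientAt_of_isMinOn_proxObjective hconv hμ hw')
  rw [← smul_sub, real_inner_smul_left] at hmono
  have hsplit : c' - c = ((c' - w') - (c - w)) + (w' - w) := by abel
  rw [hsplit, inner_add_right, real_inner_self_eq_norm_sq]
  exact add_nonneg (sq_nonneg _) (nonneg_of_mul_nonneg_right hmono (by positivity))

theorem abs_proxObjective_sub_sub_inner_le (hconv : ConvexOn ℝ univ h) (hμ : 0 < μ)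
    (hw : IsMinOn (proxObjective h μ c) univ w) (hw' : IsMinOn (proxObjective h μ c') univ w') :
    |proxObjective h μ c' w' - proxObjective h μ c w - 1 / μ * ⟪c - w, c' - c⟫|
      ≤ 1 / (2 * μ) * ‖c' - c‖ ^ 2 := by
  have hup : proxObjective h μ c' w' ≤ proxObjective h μ c' w := hw' (mem_univ w)
  have hlo : proxObjective h μ c w ≤ proxObjective h μ c w' := hw (mem_univ w')
  have hmono := inner_sub_sub_nonneg_of_isMinOn_proxObjective hconv hμ hw hw'
  have hexp : ‖w - c'‖ ^ 2 = ‖w - c‖ ^ 2 + 2 * ⟪c - w, c' - c⟫ + ‖c' - c‖ ^ 2 := by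
    rw [← sub_sub_sub_cancel_right w c' c, norm_sub_sq_real, ← neg_sub c w, inner_neg_left,
      norm_neg]
    ring
  have hexp' : ‖w' - c‖ ^ 2 = ‖w' - c'‖ ^ 2 - 2 * ⟪c' - w', c' - c⟫ + ‖c' - c‖ ^ 2 := by
    rw [← sub_add_sub_cancel w' c' c, norm_add_sq_real, ← neg_sub c' w', inner_neg_left]
    ring
  rw [inner_sub_left] at hmono
  unfold proxObjective at hup hlo ⊢
  rw [hexp] at hup
  rw [hexp'] at hlo
  have h2μ : 1 / μ = 2 * (1 / (2 * μ)) := by field_simp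
  rw [abs_le, h2μ]
  have hmono' := mul_nonneg (by positivity : (0 : ℝ) ≤ 1 / (2 * μ)) hmono
  constructor <;> linarith

end Prox

theorem hasGradientAt_proxObjective_comp_affine {E F : Type*} [NormedAddCommGroup E]
    [InnerProductSpace ℝ E] [CompleteSpace E] [NormedAddCommGroup F] [InnerProductSpace ℝ F]
    [CompleteSpace F] {h : E → ℝ} {μ : ℝ} (hconv : ConvexOn ℝ univ h) (hμ : 0 < μ)
    (A : F →L[ℝ] E) (b : E) {v : F → E} (hv : ∀ x, IsMinOn (proxObjective h μ (A x - b)) univ (v x))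
    (x : F) :
    HasGradientAt (fun z => proxObjective h μ (A z - b) (v z))
      ((1 / μ) • ContinuousLinearMap.adjoint A (A x - b - v x)) x := by
  refine hasGradientAt_of_abs_sub_inner_le_sq (K := 1 / (2 * μ) * ‖A‖ ^ 2) fun z => ?_
  have hinner : ⟪(1 / μ) • ContinuousLinearMap.adjoint A (A x - b - v x), z - x⟫
      = 1 / μ * ⟪A x - b - v x, (A z - b) - (A x - b)⟫ := by
    rw [real_inner_smul_left, ContinuousLinearMap.adjoint_inner_left, sub_sub_sub_cancel_right,
      map_sub]
  have hA : ‖(A z - b) - (A x - b)‖ ≤ ‖A‖ * ‖z - x‖ := by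
    rw [sub_sub_sub_cancel_right, ← map_sub]
    exact A.le_opNorm _
  calc _ ≤ 1 / (2 * μ) * ‖(A z - b) - (A x - b)‖ ^ 2 := by
        rw [hinner]
        exact abs_proxObjective_sub_sub_inner_le hconv hμ (hv x) (hv z)
    _ ≤ 1 / (2 * μ) * (‖A‖ * ‖z - x‖) ^ 2 := by gcongr
    _ = 1 / (2 * μ) * ‖A‖ ^ 2 * ‖z - x‖ ^ 2 := by ring

/-- Gradient formula and gradient bound for the smoothed function
`G(x) = f(x) + h(v(x)) + (1/(2μ))‖Ax − b − v(x)‖²`, where `v(x) = P_μ(Ax − b)`. -/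
theorem smoothed_function_gradient {n m : ℕ}
    (f : EuclideanSpace ℝ (Fin n) → ℝ)
    (gf : EuclideanSpace ℝ (Fin n) → EuclideanSpace ℝ (Fin n))
    (hgf : ∀ x, HasGradientAt f (gf x) x)
    (lf : ℝ) (hlf : ∀ x, ‖gf x‖ ≤ lf)
    (h : EuclideanSpace ℝ (Fin m) → ℝ) (hconv : ConvexOn ℝ Set.univ h)
    (lh : ℝ) (hlh : ∀ x y, |h x - h y| ≤ lh * ‖x - y‖)
    (A : EuclideanSpace ℝ (Fin n) →L[ℝ] EuclideanSpace ℝ (Fin m))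
    (b : EuclideanSpace ℝ (Fin m)) (μ : ℝ) (hμ : 0 < μ)
    (v : EuclideanSpace ℝ (Fin n) → EuclideanSpace ℝ (Fin m))
    (hv : ∀ x, IsMinOn (fun y => h y + 1 / (2 * μ) * ‖y - (A x - b)‖ ^ 2) Set.univ (v x)) :
    ∀ x, HasGradientAt
        (fun z => f z + h (v z) + 1 / (2 * μ) * ‖A z - b - v z‖ ^ 2)
        (gf x + (1 / μ) • (ContinuousLinearMap.adjoint A) (A x - b - v x)) x ∧
      ‖gf x + (1 / μ) • (ContinuousLinearMap.adjoint A) (A x - b - v x)‖ ≤ lf + lh * ‖A‖ := by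
  intro x
  constructor
  · have hG : (fun z => f z + h (v z) + 1 / (2 * μ) * ‖A z - b - v z‖ ^ 2)
        = fun z => f z + proxObjective h μ (A z - b) (v z) := by
      funext z
      rw [proxObjective, norm_sub_rev, add_assoc]
    rw [hG]
    exact (hgf x).add (hasGradientAt_proxObjective_comp_affine hconv hμ A b hv x)
  · have hsub := hasSubgradientAt_of_isMinOn_proxObjective hconv hμ (hv x)
    rw [← map_smul]
    exact (norm_add_le _ _).trans (add_le_add (hlf x) (hsub.norm_adjoint_apply_le hlh A))
end

section
/- Suppose a nonnegative sequence {Δ_t} satisfies Δ_{t+1} ≤ ((Q₁ + t − 1)/(Q₁ + t)) Δ_t + Q₂ / (t √t) for all t ≥ 1, where Q₁ ≥ 1 and Q₂ ≥ 0. Then for all t ≥ 1: Δ_t ≤ (Q₁/t) Δ_1 + 2 Q₂ (Q₁ + 1) / √t. -/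
open Real

/-!
Multiplying the recursion by `Q₁ + t` shows that `w_t = (Q₁ + t - 1) Δ_t` grows by at most
`(Q₁ + 1) Q₂ / √t` per step. Since `1 / √t ≤ 2 (√t - √(t - 1))`, these increments telescope to
`2 (Q₁ + 1) Q₂ √(t - 1)`, and `t Δ_t ≤ w_t` because `Q₁ ≥ 1`.
-/

lemma one_div_sqrt_le_two_mul_sqrt_sub_sqrt_sub_one {x : ℝ} (hx : 1 ≤ x) :
    1 / √x ≤ 2 * (√x - √(x - 1)) := by
  have hpos : 0 < √x := sqrt_pos.2 (by linarith)
  have hsq : √x ^ 2 = x := sq_sqrt (by linarith)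
  have hsq' : √(x - 1) ^ 2 = x - 1 := sq_sqrt (by linarith)
  rw [div_le_iff₀ hpos]
  nlinarith [sq_nonneg (√x - √(x - 1))]

lemma le_add_two_mul_sqrt_of_succ_le_add_div_sqrt {w : ℕ → ℝ} {K : ℝ} (hK : 0 ≤ K)
    (h : ∀ t : ℕ, 1 ≤ t → w (t + 1) ≤ w t + K / √t) :
    ∀ t : ℕ, 1 ≤ t → w t ≤ w 1 + 2 * K * √((t : ℝ) - 1) := by
  intro t ht
  induction t, ht using Nat.le_induction with
  | base => simp
  | succ t ht ih =>
    have hinc : K / √t ≤ 2 * K * (√t - √((t : ℝ) - 1)) := by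
      have := mul_le_mul_of_nonneg_left
        (one_div_sqrt_le_two_mul_sqrt_sub_sqrt_sub_one (x := t) (by exact_mod_cast ht)) hK
      rwa [mul_one_div, ← mul_assoc, mul_comm K 2] at this
    have hcast : ((t + 1 : ℕ) : ℝ) - 1 = t := by push_cast; ring
    rw [hcast]
    linarith [h t ht]

lemma mul_le_of_le_div_mul_add_div_mul_sqrt {Q₁ Q₂ t a b : ℝ} (hQ₁ : 0 ≤ Q₁) (hQ₂ : 0 ≤ Q₂)
    (ht : 1 ≤ t) (h : b ≤ (Q₁ + t - 1) / (Q₁ + t) * a + Q₂ / (t * √t)) :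
    (Q₁ + t) * b ≤ (Q₁ + t - 1) * a + (Q₁ + 1) * Q₂ / √t := by
  have hQt : 0 < Q₁ + t := by linarith
  have hsqrt : 0 < √t := sqrt_pos.2 (by linarith)
  have hratio : (Q₁ + t) / t ≤ Q₁ + 1 := by
    rw [div_le_iff₀ (by linarith)]
    nlinarith
  calc (Q₁ + t) * b ≤ (Q₁ + t) * ((Q₁ + t - 1) / (Q₁ + t) * a + Q₂ / (t * √t)) :=
        mul_le_mul_of_nonneg_left h hQt.le
    _ = (Q₁ + t - 1) * a + (Q₁ + t) / t * (Q₂ / √t) := by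
        field_simp
    _ ≤ (Q₁ + t - 1) * a + (Q₁ + 1) * (Q₂ / √t) := by
        gcongr
    _ = (Q₁ + t - 1) * a + (Q₁ + 1) * Q₂ / √t := by rw [mul_div_assoc]

lemma le_div_add_div_sqrt_of_mul_le {t d A B : ℝ} (ht : 0 < t) (h : t * d ≤ A + B * √t) :
    d ≤ A / t + B / √t := by
  have hsqrt : √t * √t = t := mul_self_sqrt ht.le
  calc d ≤ (A + B * √t) / t := by
        rw [le_div_iff₀ ht]
        linarith
    _ = A / t + B / √t := by
        field_simp
        linear_combination B * hsqrt

/-- Recursion bound from Theorem 2(ii): if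
`Δ_{t+1} ≤ ((Q₁+t−1)/(Q₁+t)) Δ_t + Q₂/(t√t)` for `t ≥ 1`, then
`Δ_t ≤ (Q₁/t) Δ_1 + 2Q₂(Q₁+1)/√t`. -/
theorem diminishing_recursion_bound (Δ : ℕ → ℝ) (Q₁ Q₂ : ℝ)
    (hΔ : ∀ t, 0 ≤ Δ t) (hQ₁ : 1 ≤ Q₁) (hQ₂ : 0 ≤ Q₂)
    (hrec : ∀ t : ℕ, 1 ≤ t →
      Δ (t + 1) ≤ (Q₁ + (t : ℝ) - 1) / (Q₁ + (t : ℝ)) * Δ t + Q₂ / ((t : ℝ) * Real.sqrt t)) :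
    ∀ t : ℕ, 1 ≤ t →
      Δ t ≤ Q₁ / (t : ℝ) * Δ 1 + 2 * Q₂ * (Q₁ + 1) / Real.sqrt t := by
  have hw := le_add_two_mul_sqrt_of_succ_le_add_div_sqrt (w := fun t ↦ (Q₁ + t - 1) * Δ t)
    (K := (Q₁ + 1) * Q₂) (by positivity) fun t ht ↦ by
      have := mul_le_of_le_div_mul_add_div_mul_sqrt (by linarith) hQ₂
        (by exact_mod_cast ht) (hrec t ht)
      push_cast
      linarith
  intro t ht
  have htR : (1 : ℝ) ≤ t := by exact_mod_cast ht
  rw [div_mul_eq_mul_div]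
  refine le_div_add_div_sqrt_of_mul_le (by positivity) ?_
  calc t * Δ t ≤ (Q₁ + t - 1) * Δ t := mul_le_mul_of_nonneg_right (by linarith) (hΔ t)
    _ ≤ Q₁ * Δ 1 + 2 * ((Q₁ + 1) * Q₂) * √((t : ℝ) - 1) := by simpa using hw t ht
    _ ≤ Q₁ * Δ 1 + 2 * Q₂ * (Q₁ + 1) * √t := by
      have : √((t : ℝ) - 1) ≤ √t := sqrt_le_sqrt (by linarith)
      nlinarith [mul_le_mul_of_nonneg_left this (by positivity : 0 ≤ (Q₁ + 1) * Q₂)]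
end

section
/- Let R : ℝ^n → ℝ be differentiable and σ-strongly convex, θ > 0, and suppose x⁺ satisfies R(x⁺) + (θ/2)‖x⁺ − x‖² ≤ R(x) (sufficient decrease from a proximal-type update). Then ‖x⁺ − x‖ ≤ (2/(σ + θ))‖∇R(x)‖. -/
open scoped RealInnerProductSpace

theorem norm_le_inv_mul_norm_of_mul_norm_sq_le_inner {E : Type*} [NormedAddCommGroup E]
    [InnerProductSpace ℝ E] {c : ℝ} (hc : 0 < c) {g d : E} (h : c * ‖d‖ ^ 2 ≤ ⟪g, d⟫) :
    ‖d‖ ≤ c⁻¹ * ‖g‖ := by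
  rw [inv_mul_eq_div, le_div_iff₀ hc]
  rcases (norm_nonneg d).eq_or_lt with hd | hd
  · rw [← hd, zero_mul]
    exact norm_nonneg g
  · refine le_of_mul_le_mul_right ?_ hd
    calc ‖d‖ * c * ‖d‖ = c * ‖d‖ ^ 2 := by ring
      _ ≤ ⟪g, d⟫ := h
      _ ≤ ‖g‖ * ‖d‖ := real_inner_le_norm g d

theorem sufficient_decrease_step_bound_general {n : ℕ}
    (R : EuclideanSpace ℝ (Fin n) → ℝ)
    (gR : EuclideanSpace ℝ (Fin n) → EuclideanSpace ℝ (Fin n))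
    (σ θ : ℝ) (hσ : 0 < σ) (hθ : 0 < θ)
    (hsc : ∀ a b, R a + ⟪gR a, b - a⟫ + σ / 2 * ‖b - a‖ ^ 2 ≤ R b)
    (x xplus : EuclideanSpace ℝ (Fin n))
    (hdec : R xplus + θ / 2 * ‖xplus - x‖ ^ 2 ≤ R x) :
    ‖xplus - x‖ ≤ 2 / (σ + θ) * ‖gR x‖ := by
  have hdescent : (σ + θ) / 2 * ‖x - xplus‖ ^ 2 ≤ ⟪gR x, x - xplus⟫ := by
    have hconv := hsc x xplus
    rw [norm_sub_rev, ← neg_sub xplus x, inner_neg_right]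
    linarith
  rw [norm_sub_rev, ← inv_div]
  exact norm_le_inv_mul_norm_of_mul_norm_sq_le_inner (by positivity) hdescent

/-- Lemma 6: if `R` is σ-strongly convex and differentiable, `θ > 0`, and `x⁺`
satisfies the sufficient decrease `R(x⁺) + (θ/2)‖x⁺ − x‖² ≤ R(x)`, then
`‖x⁺ − x‖ ≤ (2/(σ+θ))‖∇R(x)‖`. -/
theorem sufficient_decrease_step_bound {n : ℕ}
    (R : EuclideanSpace ℝ (Fin n) → ℝ)
    (gR : EuclideanSpace ℝ (Fin n) → EuclideanSpace ℝ (Fin n))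
    (hgR : ∀ z, HasGradientAt R (gR z) z)
    (σ θ : ℝ) (hσ : 0 < σ) (hθ : 0 < θ)
    (hsc : ∀ a b, R a + ⟪gR a, b - a⟫ + σ / 2 * ‖b - a‖ ^ 2 ≤ R b)
    (x xplus : EuclideanSpace ℝ (Fin n))
    (hdec : R xplus + θ / 2 * ‖xplus - x‖ ^ 2 ≤ R x) :
    ‖xplus - x‖ ≤ 2 / (σ + θ) * ‖gR x‖ :=
  sufficient_decrease_step_bound_general R gR σ θ hσ hθ hsc x xplus hdec
end
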